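/- arXiv:1506.03154 — 8 statements merged into one kernel-verified Lean document; each statement's English description precedes it below -/
import Mathlib

section
/- Let n ≥ 1 be an integer and 0 < c ≤ C < ∞. Then there exists a constant C₀ = C₀(n, c, C) < ∞ such that the following holds: if (X, d) is a metric space with the segment property and μ is a Borel measure on X satisfying c·rⁿ ≤ μ(B(y, r)) ≤ C·rⁿ for all y ∈ X and all 0 < r ≤ 1, then for every x ∈ X and every r > 0 one has μ(B(x, r)) ≤ C₀·rⁿ·e^{C₀ r}. -/
open MeasureTheory Metric
open scoped ENNReal

/-- A metric space has the *segment property* if any two points are joined by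
"midpoints at every parameter": for all `y z` and `s ∈ [0, dist y z]` there is a point `p`
with `dist y p = s` and `dist p z = dist y z - s`. -/
def SegmentProperty (X : Type) [MetricSpace X] : Prop :=
  ∀ y z : X, ∀ s : ℝ, 0 ≤ s → s ≤ dist y z →
    ∃ p : X, dist y p = s ∧ dist p z = dist y z - s

/-- For `n ≥ 1` and `0 < c ≤ C` there is `C₀ = C₀(n, c, C) < ∞` such that:
if `(X, d)` is a metric space with the segment property and `μ` a Borel measure with
`c rⁿ ≤ μ(B(y,r)) ≤ C rⁿ` for all `y` and `0 < r ≤ 1`, then `μ(B(x,r)) ≤ C₀ rⁿ e^{C₀ r}`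
for all `x` and `r > 0`. -/
theorem stmt_0 (n : ℕ) (hn : 1 ≤ n) (c C : ℝ) (hc : 0 < c) (hcC : c ≤ C) :
    ∃ C₀ : ℝ, 0 < C₀ ∧
      ∀ (X : Type) [MetricSpace X] [MeasurableSpace X] [BorelSpace X]
        (μ : Measure X),
        SegmentProperty X →
        (∀ (y : X) (r : ℝ), 0 < r → r ≤ 1 →
          ENNReal.ofReal (c * r ^ n) ≤ μ (ball y r) ∧
          μ (ball y r) ≤ ENNReal.ofReal (C * r ^ n)) →
        ∀ (x : X) (r : ℝ), 0 < r →
          μ (ball x r) ≤ ENNReal.ofReal (C₀ * r ^ n * Real.exp (C₀ * r)) := by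
  classical
  have hC : 0 < C := hc.trans_le hcC
  set N : ℕ := ⌈C * 8 ^ n / c⌉₊ with hNdef
  have h8pos : (0:ℝ) < 8 ^ n := by positivity
  have hNval : C * 8 ^ n / c ≤ (N : ℝ) := Nat.le_ceil _
  have hN1 : 1 ≤ N := by
    rw [hNdef, Nat.one_le_ceil_iff]
    positivity
  have hNposR : (0:ℝ) < N := by exact_mod_cast hN1
  set C₀ : ℝ := max C (2 * Real.log N) + 1 with hC₀def
  have hCC₀ : C ≤ C₀ := by
    have := le_max_left C (2 * Real.log N); linarith
  have hlogC₀ : 2 * Real.log N ≤ C₀ := by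
    have := le_max_right C (2 * Real.log N); linarith
  have hC₀pos : 0 < C₀ := lt_of_lt_of_le hC hCC₀
  refine ⟨C₀, hC₀pos, ?_⟩
  intro X _ _ _ μ hseg hvol x r hr
  -- cardinality bound for 1/4-separated sets in a (7/8)-ball
  have card_le : ∀ (x : X) (S : Finset X), (∀ y ∈ S, y ∈ ball x (7/8)) →
      (∀ y ∈ S, ∀ z ∈ S, y ≠ z → (1:ℝ)/4 ≤ dist y z) → S.card ≤ N := by
    intro x S hSb hsep
    have hdisj : (S : Set X).PairwiseDisjoint (fun y => ball y (1/8 : ℝ)) := by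
      intro a ha b hb hab
      exact ball_disjoint_ball (by
        have := hsep a ha b hb hab; linarith)
    have h1 : ∑ y ∈ S, μ (ball y (1/8 : ℝ)) = μ (⋃ y ∈ S, ball y (1/8 : ℝ)) :=
      (measure_biUnion_finset hdisj (fun y _ => measurableSet_ball)).symm
    have h2 : μ (⋃ y ∈ S, ball y (1/8 : ℝ)) ≤ μ (ball x 1) := by
      refine measure_mono ?_
      intro z hz
      simp only [Set.mem_iUnion] at hz
      obtain ⟨y, hyS, hzy⟩ := hz
      have hyx := hSb y hyS
      rw [mem_ball] at *
      have : dist z x ≤ dist z y + dist y x := dist_triangle z y x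
      linarith
    have h3 : (S.card : ℝ≥0∞) * ENNReal.ofReal (c * (1/8 : ℝ) ^ n) ≤
        ∑ y ∈ S, μ (ball y (1/8 : ℝ)) := by
      calc (S.card : ℝ≥0∞) * ENNReal.ofReal (c * (1/8 : ℝ) ^ n)
          = ∑ _y ∈ S, ENNReal.ofReal (c * (1/8 : ℝ) ^ n) := by
            rw [Finset.sum_const, nsmul_eq_mul]
        _ ≤ ∑ y ∈ S, μ (ball y (1/8 : ℝ)) :=
            Finset.sum_le_sum fun y _ => (hvol y (1/8) (by norm_num) (by norm_num)).1
    have h4 : μ (ball x 1) ≤ ENNReal.ofReal C := by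
      have := (hvol x 1 one_pos le_rfl).2
      simpa using this
    have h5 : (S.card : ℝ≥0∞) * ENNReal.ofReal (c * (1/8 : ℝ) ^ n) ≤ ENNReal.ofReal C :=
      le_trans h3 (le_trans (le_of_eq h1) (le_trans h2 h4))
    have h6 : ENNReal.ofReal ((S.card : ℝ) * (c * (1/8 : ℝ) ^ n)) ≤ ENNReal.ofReal C := by
      rw [ENNReal.ofReal_mul (by positivity : (0:ℝ) ≤ (S.card : ℝ))]
      simpa using h5
    have h7 : (S.card : ℝ) * (c * (1/8 : ℝ) ^ n) ≤ C :=
      (ENNReal.ofReal_le_ofReal_iff hC.le).1 h6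
    have h8 : (S.card : ℝ) ≤ C * 8 ^ n / c := by
      rw [le_div_iff₀ hc]
      have hpow : (1/8 : ℝ) ^ n * 8 ^ n = 1 := by
        rw [← mul_pow]; norm_num
      nlinarith [pow_pos (show (0:ℝ) < 1/8 by norm_num) n]
    exact_mod_cast h8.trans hNval
  -- existence of a maximal 1/4-separated net in the (7/8)-ball
  have exists_net : ∀ x : X, ∃ S : Finset X, (∀ y ∈ S, y ∈ ball x (7/8)) ∧ S.card ≤ N ∧
      ∀ p ∈ ball x (7/8), ∃ y ∈ S, dist p y < 1/4 := by
    intro x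
    set K : Set ℕ := {k | ∃ S : Finset X, (∀ y ∈ S, y ∈ ball x (7/8)) ∧
      (∀ y ∈ S, ∀ z ∈ S, y ≠ z → (1:ℝ)/4 ≤ dist y z) ∧ S.card = k} with hK
    have hK0 : 0 ∈ K := ⟨∅, by simp, by simp, by simp⟩
    have hKbdd : ∀ k ∈ K, k ≤ N := by
      rintro k ⟨S, h1, h2, h3⟩
      exact h3 ▸ card_le x S h1 h2
    have hmem : sSup K ∈ K := Nat.sSup_mem ⟨0, hK0⟩ ⟨N, hKbdd⟩
    obtain ⟨S, hSb, hSsep, hScard⟩ := hmem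
    refine ⟨S, hSb, hKbdd S.card ⟨S, hSb, hSsep, rfl⟩, ?_⟩
    intro p hp
    by_contra hcon
    push_neg at hcon
    have hpS : p ∉ S := fun h => by
      have := hcon p h; simp at this; linarith
    have hins : (insert p S).card ∈ K := by
      refine ⟨insert p S, ?_, ?_, rfl⟩
      · intro y hy
        rcases Finset.mem_insert.1 hy with h | h
        · exact h ▸ hp
        · exact hSb y h
      · intro y hy z hz hyz
        rcases Finset.mem_insert.1 hy with h1 | h1 <;>
          rcases Finset.mem_insert.1 hz with h2 | h2
        · exact absurd (h1.trans h2.symm) hyz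
        · rw [h1]; exact hcon z h2
        · rw [h2, dist_comm]; exact hcon y h1
        · exact hSsep y h1 z h2 hyz
    have hle : (insert p S).card ≤ sSup K := le_csSup ⟨N, fun k hk => hKbdd k hk⟩ hins
    rw [Finset.card_insert_of_notMem hpS, hScard] at hle
    omega
  -- key induction
  have key : ∀ m : ℕ, ∀ x : X,
      μ (ball x (1 + (m : ℝ) / 2)) ≤ ENNReal.ofReal C * (N : ℝ≥0∞) ^ m := by
    intro m
    induction m with
    | zero =>
      intro x
      have := (hvol x 1 one_pos le_rfl).2
      simpa using this
    | succ m ih =>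
      intro x
      obtain ⟨S, hSb, hScard, hSnet⟩ := exists_net x
      have hcover : ball x (1 + ((m : ℝ) + 1) / 2) ⊆ ⋃ y ∈ S, ball y (1 + (m : ℝ) / 2) := by
        intro z hz
        rw [mem_ball, dist_comm] at hz
        set d := dist x z with hd
        have hd0 : 0 ≤ d := dist_nonneg
        obtain ⟨p, hp1, hp2⟩ := hseg x z (min d (3/4))
          (le_min hd0 (by norm_num)) (min_le_left _ _)
        have hpz : dist p z < 3/4 + (m : ℝ) / 2 := by
          rw [hp2, ← hd]
          rcases le_or_gt d (3/4) with h | h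
          · rw [min_eq_left h]
            have : (0:ℝ) ≤ (m:ℝ) := Nat.cast_nonneg m
            linarith
          · rw [min_eq_right h.le]; push_cast at hz ⊢; linarith
        have hpball : p ∈ ball x (7/8) := by
          rw [mem_ball, dist_comm, hp1]
          exact lt_of_le_of_lt (min_le_right _ _) (by norm_num)
        obtain ⟨y, hyS, hpy⟩ := hSnet p hpball
        simp only [Set.mem_iUnion]
        refine ⟨y, hyS, ?_⟩
        rw [mem_ball]
        have : dist z y ≤ dist z p + dist p y := dist_triangle z p y
        rw [dist_comm z p] at this
        linarith
      calc μ (ball x (1 + ((m : ℕ) + 1 : ℕ) / 2 : ℝ))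
          ≤ μ (⋃ y ∈ S, ball y (1 + (m : ℝ) / 2)) := by
            refine measure_mono ?_
            convert hcover using 3
            push_cast; ring
        _ ≤ ∑ y ∈ S, μ (ball y (1 + (m : ℝ) / 2)) := measure_biUnion_finset_le S _
        _ ≤ ∑ _y ∈ S, ENNReal.ofReal C * (N : ℝ≥0∞) ^ m := Finset.sum_le_sum fun y _ => ih y
        _ = (S.card : ℝ≥0∞) * (ENNReal.ofReal C * (N : ℝ≥0∞) ^ m) := by
            rw [Finset.sum_const, nsmul_eq_mul]
        _ ≤ (N : ℝ≥0∞) * (ENNReal.ofReal C * (N : ℝ≥0∞) ^ m) := by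
            exact mul_le_mul_left (by exact_mod_cast hScard) _
        _ = ENNReal.ofReal C * (N : ℝ≥0∞) ^ (m + 1) := by ring
  -- conclude
  rcases le_or_gt r 1 with h1 | h1
  · refine le_trans (hvol x r hr h1).2 (ENNReal.ofReal_le_ofReal ?_)
    have hrn : (0:ℝ) ≤ r ^ n := by positivity
    have hexp : 1 ≤ Real.exp (C₀ * r) := Real.one_le_exp (by positivity)
    nlinarith [mul_le_mul_of_nonneg_right hCC₀ hrn,
      mul_le_mul_of_nonneg_left hexp (show (0:ℝ) ≤ C₀ * r ^ n by positivity)]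
  · set m : ℕ := ⌈2 * (r - 1)⌉₊ with hmdef
    have hm1 : r ≤ 1 + (m : ℝ) / 2 := by
      have := Nat.le_ceil (2 * (r - 1)); rw [← hmdef] at this; linarith
    have hm2 : (m : ℝ) ≤ 2 * r := by
      have h := Nat.ceil_lt_add_one (show (0:ℝ) ≤ 2 * (r - 1) by linarith)
      rw [← hmdef] at h; linarith
    calc μ (ball x r) ≤ μ (ball x (1 + (m : ℝ) / 2)) := measure_mono (ball_subset_ball hm1)
      _ ≤ ENNReal.ofReal C * (N : ℝ≥0∞) ^ m := key m x
      _ = ENNReal.ofReal (C * (N : ℝ) ^ m) := by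
          rw [ENNReal.ofReal_mul hC.le, ENNReal.ofReal_pow (by positivity)]
          norm_cast
      _ ≤ ENNReal.ofReal (C₀ * r ^ n * Real.exp (C₀ * r)) := by
          apply ENNReal.ofReal_le_ofReal
          have hlogN : 0 ≤ Real.log N := Real.log_natCast_nonneg N
          have hNm : (N : ℝ) ^ m = Real.exp ((m : ℝ) * Real.log N) := by
            rw [Real.exp_nat_mul, Real.exp_log hNposR]
          have harg : (m : ℝ) * Real.log N ≤ C₀ * r := by
            calc (m : ℝ) * Real.log N ≤ 2 * r * Real.log N :=
                  mul_le_mul_of_nonneg_right hm2 hlogN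
              _ = (2 * Real.log N) * r := by ring
              _ ≤ C₀ * r := mul_le_mul_of_nonneg_right hlogC₀ (by linarith)
          have hexp : Real.exp ((m : ℝ) * Real.log N) ≤ Real.exp (C₀ * r) :=
            Real.exp_le_exp.2 harg
          have hrn : (1:ℝ) ≤ r ^ n := one_le_pow₀ h1.le
          have hexppos : 0 < Real.exp (C₀ * r) := Real.exp_pos _
          rw [hNm]
          calc C * Real.exp ((m : ℝ) * Real.log N)
              ≤ C * Real.exp (C₀ * r) := mul_le_mul_of_nonneg_left hexp hC.le
            _ ≤ C₀ * Real.exp (C₀ * r) := mul_le_mul_of_nonneg_right hCC₀ hexppos.le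
            _ = C₀ * 1 * Real.exp (C₀ * r) := by ring
            _ ≤ C₀ * r ^ n * Real.exp (C₀ * r) := by
                have h2 : C₀ * 1 ≤ C₀ * r ^ n := mul_le_mul_of_nonneg_left hrn hC₀pos.le
                exact mul_le_mul_of_nonneg_right h2 hexppos.le
    done
end

section
/- Let (X, d) be a metric space, μ a Borel measure on X, V > 0 and N ≥ 1 an integer. Suppose that μ(B(y, 1/4)) ≤ V for all y ∈ X, and that for every y ∈ X there exist points y₁, …, y_N ∈ X such that for every real r ≥ 1/4 one has B(y, r + 1/4) ⊆ B(y₁, r) ∪ … ∪ B(y_N, r). Then for every x ∈ X and every integer k ≥ 1 one has μ(B(x, k/4)) ≤ N^{k−1}·V. -/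
open MeasureTheory Metric ENNReal

/-- Let `(X, d)` be a metric space, `μ` a Borel measure on `X`, `V > 0` and
`N ≥ 1`. Suppose `μ(B(y, 1/4)) ≤ V` for all `y`, and for every `y` there exist
`y₁, …, y_N` such that for every `r ≥ 1/4` one has `B(y, r + 1/4) ⊆ B(y₁, r) ∪ … ∪ B(y_N, r)`.
Then for every `x` and every integer `k ≥ 1` one has `μ(B(x, k/4)) ≤ N^{k-1} · V`. -/
theorem stmt_2 (X : Type) [MetricSpace X] [MeasurableSpace X] [BorelSpace X]
    (μ : Measure X) (V : ℝ) (hV : 0 < V) (N : ℕ) (hN : 1 ≤ N)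
    (hsmall : ∀ y : X, μ (ball y (1/4)) ≤ ENNReal.ofReal V)
    (hcover : ∀ y : X, ∃ p : Fin N → X, ∀ r : ℝ, 1/4 ≤ r →
      ball y (r + 1/4) ⊆ ⋃ i : Fin N, ball (p i) r) :
    ∀ (x : X) (k : ℕ), 1 ≤ k →
      μ (ball x ((k : ℝ) / 4)) ≤ (N : ℝ≥0∞) ^ (k - 1) * ENNReal.ofReal V := by
  intro x k hk
  induction k generalizing x with
  | zero => omega
  | succ k ih =>
    rcases Nat.eq_or_lt_of_le hk with h1 | h1
    · simp only [← h1]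
      simpa using hsmall x
    · have hk1 : 1 ≤ k := by omega
      obtain ⟨p, hp⟩ := hcover x
      have hsub : ball x (((k + 1 : ℕ) : ℝ) / 4) ⊆ ⋃ i : Fin N, ball (p i) ((k : ℝ) / 4) := by
        have : (((k + 1 : ℕ) : ℝ) / 4) = (k : ℝ) / 4 + 1/4 := by push_cast; ring
        rw [this]
        exact hp _ (by
          have : (1 : ℝ) ≤ (k : ℝ) := by exact_mod_cast hk1
          linarith)
      calc μ (ball x (((k + 1 : ℕ) : ℝ) / 4)) ≤ μ (⋃ i : Fin N, ball (p i) ((k : ℝ) / 4)) :=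
            measure_mono hsub
        _ ≤ ∑ i : Fin N, μ (ball (p i) ((k : ℝ) / 4)) := measure_iUnion_fintype_le μ _
        _ ≤ ∑ _i : Fin N, (N : ℝ≥0∞) ^ (k - 1) * ENNReal.ofReal V :=
            Finset.sum_le_sum fun i _ => ih (p i) hk1
        _ = (N : ℝ≥0∞) * ((N : ℝ≥0∞) ^ (k - 1) * ENNReal.ofReal V) := by
            simp [Finset.sum_const, mul_comm]
        _ ≤ (N : ℝ≥0∞) ^ (k + 1 - 1) * ENNReal.ofReal V := by
            rw [← mul_assoc]
            gcongr
            have hkk : k - 1 + 1 = k := by omega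
            rw [Nat.add_sub_cancel, ← pow_succ', hkk]
end

section
/- Let F : ℝ → [0, ∞] be a measurable function, let s < t be real numbers, and let C ≥ 0 be such that for every a ∈ (0, (t − s)/2] one has ∫_{[s+a, s+2a]} F(u) du ≤ C·√a. Then ∫_{[s,t]} F(u) du ≤ (1 + √2)·C·√(t − s). -/
open MeasureTheory ENNReal

/-- Let `F : ℝ → [0, ∞]` be measurable, `s < t`, `C ≥ 0`, and assume that for
every `a ∈ (0, (t − s)/2]` one has `∫_{[s+a, s+2a]} F ≤ C √a`. Then
`∫_{[s,t]} F ≤ (1 + √2) C √(t − s)`. -/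
theorem stmt_5 (F : ℝ → ℝ≥0∞) (hF : Measurable F) (s t : ℝ) (hst : s < t)
    (C : ℝ) (hC : 0 ≤ C)
    (h : ∀ a : ℝ, 0 < a → a ≤ (t - s) / 2 →
      ∫⁻ u in Set.Icc (s + a) (s + 2 * a), F u ≤ ENNReal.ofReal (C * Real.sqrt a)) :
    ∫⁻ u in Set.Icc s t, F u ≤
      ENNReal.ofReal ((1 + Real.sqrt 2) * C * Real.sqrt (t - s)) := by
  set L := t - s with hLdef
  have hL0 : 0 < L := by simp only [hLdef]; linarith
  -- the dyadic intervals
  set a : ℕ → ℝ := fun k => L / 2 ^ (k + 1) with ha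
  have ha0 : ∀ k, 0 < a k := fun k => by positivity
  have haL : ∀ k, a k ≤ L / 2 := by
    intro k
    apply div_le_div_of_nonneg_left hL0.le two_pos
    calc (2:ℝ) = 2 ^ 1 := by norm_num
    _ ≤ 2 ^ (k + 1) := pow_le_pow_right₀ one_le_two (by omega)
  have cover : Set.Ioc s t ⊆ ⋃ k : ℕ, Set.Icc (s + a k) (s + 2 * a k) := by
    intro x hx
    have hr0 : 0 < x - s := by linarith [hx.1]
    have hrL : x - s ≤ L := by simp only [hLdef]; linarith [hx.2]
    have hex : ∃ n : ℕ, L / 2 ^ n < x - s := by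
      obtain ⟨n, hn⟩ := pow_unbounded_of_one_lt (L / (x - s)) one_lt_two
      refine ⟨n, ?_⟩
      rw [div_lt_iff₀ (by positivity)]
      rw [div_lt_iff₀ hr0] at hn
      linarith
    set m := Nat.find hex with hm
    have hm0 : m ≠ 0 := by
      intro h0
      have := Nat.find_spec hex
      rw [← hm, h0] at this
      simp at this
      linarith
    obtain ⟨k, hk⟩ : ∃ k, m = k + 1 := ⟨m - 1, by omega⟩
    have h1 : L / 2 ^ (k + 1) < x - s := by
      have := Nat.find_spec hex; rwa [← hm, hk] at this
    have h2 : ¬ (L / 2 ^ k < x - s) := Nat.find_min hex (by omega)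
    push_neg at h2
    refine Set.mem_iUnion.2 ⟨k, ⟨by simp only [ha]; linarith, ?_⟩⟩
    have h3 : 2 * (L / 2 ^ (k + 1)) = L / 2 ^ k := by
      rw [pow_succ]; ring
    simp only [ha]; rw [h3]; linarith
  -- each piece
  have hpiece : ∀ k : ℕ, ∫⁻ u in Set.Icc (s + a k) (s + 2 * a k), F u ≤
      ENNReal.ofReal (C * Real.sqrt (a k)) := fun k => h (a k) (ha0 k) (haL k)
  -- arithmetic: geometric series
  have hs2 : (1:ℝ) < Real.sqrt 2 := by
    rw [show (1:ℝ) = Real.sqrt 1 by simp]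
    exact Real.sqrt_lt_sqrt (by norm_num) (by norm_num)
  set r : ℝ := (Real.sqrt 2)⁻¹ with hr
  have hr0 : 0 ≤ r := by positivity
  have hr1 : r < 1 := inv_lt_one_of_one_lt₀ hs2
  have hsqp : ∀ n : ℕ, Real.sqrt (2 ^ n) = Real.sqrt 2 ^ n := by
    intro n; induction n with
    | zero => simp
    | succ n ih => rw [pow_succ, pow_succ, Real.sqrt_mul (by positivity), ih]
  set c : ℝ := C * Real.sqrt L * r with hc
  have hsqrt : ∀ k : ℕ, C * Real.sqrt (a k) = c * r ^ k := by
    intro k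
    simp only [ha, hc, hr]
    rw [Real.sqrt_div hL0.le, hsqp, div_eq_mul_inv, ← inv_pow, pow_succ]
    ring
  -- summability and sum value
  have hsum : Summable (fun k : ℕ => c * r ^ k) :=
    (summable_geometric_of_lt_one hr0 hr1).mul_left c
  have htsum : ∑' k : ℕ, c * r ^ k = c * (1 - r)⁻¹ := by
    rw [tsum_mul_left, tsum_geometric_of_lt_one hr0 hr1]
  have hval : c * (1 - r)⁻¹ = (1 + Real.sqrt 2) * C * Real.sqrt L := by
    have h2 : Real.sqrt 2 * Real.sqrt 2 = 2 := Real.mul_self_sqrt (by norm_num)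
    have hne : Real.sqrt 2 ≠ 0 := by positivity
    have hkey : r * (1 - r)⁻¹ = 1 + Real.sqrt 2 := by
      rw [hr, ← mul_inv, mul_sub, mul_one, mul_inv_cancel₀ hne]
      exact inv_eq_of_mul_eq_one_right (by nlinarith)
    rw [hc, mul_assoc, hkey]
    ring
  -- main chain
  have key : ∫⁻ u in Set.Icc s t, F u = ∫⁻ u in Set.Ioc s t, F u :=
    (setLIntegral_congr Ioc_ae_eq_Icc).symm
  rw [key]
  calc ∫⁻ u in Set.Ioc s t, F u
      ≤ ∫⁻ u in ⋃ k, Set.Icc (s + a k) (s + 2 * a k), F u := lintegral_mono_set cover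
    _ ≤ ∑' k, ∫⁻ u in Set.Icc (s + a k) (s + 2 * a k), F u := lintegral_iUnion_le _ _
    _ ≤ ∑' k, ENNReal.ofReal (C * Real.sqrt (a k)) := ENNReal.tsum_le_tsum hpiece
    _ = ENNReal.ofReal (∑' k : ℕ, c * r ^ k) := by
        simp_rw [hsqrt]
        exact (ENNReal.ofReal_tsum_of_nonneg (fun k => by positivity) hsum).symm
    _ ≤ ENNReal.ofReal ((1 + Real.sqrt 2) * C * Real.sqrt L) := by
        rw [htsum, hval]
end

section
/- For every θ ∈ (0, 1) and every C₆ ≥ 0 there exists a constant C₇ = C₇(θ, C₆) < ∞ such that the following holds: let ρ ∈ [0, 1] and let f : [0, 1] → [0, ∞) be a continuous function satisfying f(t₂) ≤ exp(C₆·ρ·√(t₂ − t₁))·f(t₁) + C₆·√(t₂ − t₁) for all 0 ≤ t₁ ≤ t₂ < 1 with t₂ − t₁ ≤ θ·(1 − t₁). Then f(t₂) ≤ exp(C₇·ρ·√(t₂ − t₁))·f(t₁) + C₇·√(t₂ − t₁) for all 0 ≤ t₁ ≤ t₂ ≤ 1. -/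
/-! Split `[t₁, t₂]` at `s = t₁ + θ (1 - t₁)`: the short bound applies on `[t₁, s]`, and
`1 - s = (1 - θ) (1 - t₁)` while `t₂ - s ≤ (1 - θ) (t₂ - t₁)`. Induct on the least `n` with
`(1 - θ)ⁿ (1 - t₁) ≤ 1 - t₂`, i.e. on the number of splits needed to reach `t₂`. The constants do
not grow along the induction: on the `√`-scale the remaining piece `[s, t₂]` is shorter than
`[t₁, t₂]` by the factor `q = √(1 - θ) < 1`, so constants with `A q + C ≤ A` and
`B q + e^A C ≤ B` reproduce themselves (since `ρ ≤ 1`, the exponential factor multiplying the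
additive error of `[t₁, s]` is at most `e^A`). The endpoint `t₂ = 1`, which no finite number of
splits reaches, follows by continuity. -/

open Real

def DistortionBound (f : ℝ → ℝ) (ρ A B t₁ t₂ : ℝ) : Prop :=
  f t₂ ≤ exp (A * ρ * √(t₂ - t₁)) * f t₁ + B * √(t₂ - t₁)

lemma le_exp_add_mul_add_of_le {x y z a₁ a₂ b₁ b₂ : ℝ} (h₁ : y ≤ exp a₁ * x + b₁)
    (h₂ : z ≤ exp a₂ * y + b₂) : z ≤ exp (a₁ + a₂) * x + (exp a₂ * b₁ + b₂) :=
  calc z ≤ exp a₂ * y + b₂ := h₂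
    _ ≤ exp a₂ * (exp a₁ * x + b₁) + b₂ := by gcongr
    _ = exp (a₁ + a₂) * x + (exp a₂ * b₁ + b₂) := by rw [exp_add]; ring

namespace DistortionBound

variable {f : ℝ → ℝ} {ρ A B C q s t₁ t₂ : ℝ}

lemma refl (f : ℝ → ℝ) (ρ A B t : ℝ) : DistortionBound f ρ A B t t := by
  simp [DistortionBound]

lemma mono {A' B' : ℝ} (h : DistortionBound f ρ A B t₁ t₂) (hρ : 0 ≤ ρ) (hf : 0 ≤ f t₁)
    (hA : A ≤ A') (hB : B ≤ B') : DistortionBound f ρ A' B' t₁ t₂ := by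
  unfold DistortionBound at *
  have hd := sqrt_nonneg (t₂ - t₁)
  calc f t₂ ≤ exp (A * ρ * √(t₂ - t₁)) * f t₁ + B * √(t₂ - t₁) := h
    _ ≤ exp (A' * ρ * √(t₂ - t₁)) * f t₁ + B' * √(t₂ - t₁) := by gcongr

lemma trans (h₁ : DistortionBound f ρ C C t₁ s) (h₂ : DistortionBound f ρ A B s t₂)
    (hρ₀ : 0 ≤ ρ) (hρ₁ : ρ ≤ 1) (hC : 0 ≤ C) (hA : 0 ≤ A) (hB : 0 ≤ B)
    (hAq : A * q + C ≤ A) (hBq : B * q + exp A * C ≤ B) (hf : 0 ≤ f t₁)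
    (hst : s ≤ t₂) (hlen : t₂ - s ≤ 1) (hq : √(t₂ - s) ≤ q * √(t₂ - t₁)) :
    DistortionBound f ρ A B t₁ t₂ := by
  have hd₁ : √(s - t₁) ≤ √(t₂ - t₁) := sqrt_le_sqrt (by linarith)
  have hd₂ : ρ * √(t₂ - s) ≤ 1 :=
    mul_le_one₀ hρ₁ (sqrt_nonneg _) (sqrt_le_one.2 hlen)
  have hexp : C * ρ * √(s - t₁) + A * ρ * √(t₂ - s) ≤ A * ρ * √(t₂ - t₁) :=
    calc C * ρ * √(s - t₁) + A * ρ * √(t₂ - s)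
        ≤ C * ρ * √(t₂ - t₁) + A * ρ * (q * √(t₂ - t₁)) := by gcongr
      _ = (A * q + C) * ρ * √(t₂ - t₁) := by ring
      _ ≤ A * ρ * √(t₂ - t₁) := by gcongr
  have hexpA : A * ρ * √(t₂ - s) ≤ A := by
    rw [mul_assoc]
    exact mul_le_of_le_one_right hA hd₂
  have hadd : exp (A * ρ * √(t₂ - s)) * (C * √(s - t₁)) + B * √(t₂ - s) ≤ B * √(t₂ - t₁) :=
    calc exp (A * ρ * √(t₂ - s)) * (C * √(s - t₁)) + B * √(t₂ - s)
        ≤ exp A * (C * √(t₂ - t₁)) + B * (q * √(t₂ - t₁)) := by gcongr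
      _ = (B * q + exp A * C) * √(t₂ - t₁) := by ring
      _ ≤ B * √(t₂ - t₁) := by gcongr
  calc f t₂ ≤ exp (C * ρ * √(s - t₁) + A * ρ * √(t₂ - s)) * f t₁
        + (exp (A * ρ * √(t₂ - s)) * (C * √(s - t₁)) + B * √(t₂ - s)) :=
        le_exp_add_mul_add_of_le h₁ h₂
    _ ≤ exp (A * ρ * √(t₂ - t₁)) * f t₁ + B * √(t₂ - t₁) := by gcongr

lemma of_forall_lt (h12 : t₁ < t₂) (hf : ContinuousWithinAt f (Set.Ico t₁ t₂) t₂)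
    (h : ∀ t ∈ Set.Ico t₁ t₂, DistortionBound f ρ A B t₁ t) : DistortionBound f ρ A B t₁ t₂ :=
  hf.closure_le (by simp [closure_Ico h12.ne, h12.le])
    (Continuous.continuousWithinAt (by fun_prop)) h

end DistortionBound

section Iteration

variable {f : ℝ → ℝ} {ρ θ A B C : ℝ}

theorem distortionBound_of_pow_mul_le
    (hshort : ∀ t₁ t₂ : ℝ, 0 ≤ t₁ → t₁ ≤ t₂ → t₂ < 1 → t₂ - t₁ ≤ θ * (1 - t₁) →
      DistortionBound f ρ C C t₁ t₂)
    (hf : ∀ t ∈ Set.Icc (0 : ℝ) 1, 0 ≤ f t) (hθ₀ : 0 ≤ θ) (hθ₁ : θ ≤ 1)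
    (hρ₀ : 0 ≤ ρ) (hρ₁ : ρ ≤ 1) (hC : 0 ≤ C) (hA : 0 ≤ A) (hB : 0 ≤ B)
    (hAq : A * √(1 - θ) + C ≤ A) (hBq : B * √(1 - θ) + exp A * C ≤ B) (n : ℕ) :
    ∀ t₁ t₂ : ℝ, 0 ≤ t₁ → t₁ ≤ t₂ → t₂ < 1 → (1 - θ) ^ n * (1 - t₁) ≤ 1 - t₂ →
      DistortionBound f ρ A B t₁ t₂ := by
  induction n with
  | zero =>
    intro t₁ t₂ _ h12 _ hn
    obtain rfl : t₂ = t₁ := by linarith [pow_zero (1 - θ)]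
    exact .refl f ρ A B t₂
  | succ n ih =>
    intro t₁ t₂ ht₁ h12 ht₂ hn
    have hft₁ : 0 ≤ f t₁ := hf t₁ ⟨ht₁, by linarith⟩
    by_cases hlen : t₂ - t₁ ≤ θ * (1 - t₁)
    · have hCA : C ≤ A := by nlinarith [sqrt_nonneg (1 - θ)]
      have hCB : C ≤ B := by nlinarith [sqrt_nonneg (1 - θ), add_one_le_exp A]
      exact (hshort t₁ t₂ ht₁ h12 ht₂ hlen).mono hρ₀ hft₁ hCA hCB
    set s := t₁ + θ * (1 - t₁) with hs
    have hts : t₁ ≤ s := by nlinarith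
    have hst : s ≤ t₂ := by linarith
    have hq : √(t₂ - s) ≤ √(1 - θ) * √(t₂ - t₁) := by
      rw [← sqrt_mul (by linarith)]
      exact sqrt_le_sqrt (by nlinarith)
    have hn' : (1 - θ) ^ n * (1 - s) ≤ 1 - t₂ := by
      calc (1 - θ) ^ n * (1 - s) = (1 - θ) ^ (n + 1) * (1 - t₁) := by rw [hs]; ring
        _ ≤ 1 - t₂ := hn
    have hfirst : DistortionBound f ρ C C t₁ s :=
      hshort t₁ s ht₁ hts (by linarith) (by rw [hs, add_sub_cancel_left])
    exact hfirst.trans (ih s t₂ (by linarith) hst ht₂ hn') hρ₀ hρ₁ hC hA hB hAq hBq hft₁ hst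
      (by linarith) hq

theorem distortionBound_of_lt_one
    (hshort : ∀ t₁ t₂ : ℝ, 0 ≤ t₁ → t₁ ≤ t₂ → t₂ < 1 → t₂ - t₁ ≤ θ * (1 - t₁) →
      DistortionBound f ρ C C t₁ t₂)
    (hf : ∀ t ∈ Set.Icc (0 : ℝ) 1, 0 ≤ f t) (hθ₀ : 0 < θ) (hθ₁ : θ ≤ 1)
    (hρ₀ : 0 ≤ ρ) (hρ₁ : ρ ≤ 1) (hC : 0 ≤ C) (hA : 0 ≤ A) (hB : 0 ≤ B)
    (hAq : A * √(1 - θ) + C ≤ A) (hBq : B * √(1 - θ) + exp A * C ≤ B)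
    {t₁ t₂ : ℝ} (ht₁ : 0 ≤ t₁) (h12 : t₁ ≤ t₂) (ht₂ : t₂ < 1) :
    DistortionBound f ρ A B t₁ t₂ := by
  have hgap : 0 < 1 - t₁ := by linarith
  obtain ⟨n, hn⟩ := exists_pow_lt_of_lt_one (div_pos (sub_pos.2 ht₂) hgap)
    (sub_lt_self 1 hθ₀)
  exact distortionBound_of_pow_mul_le hshort hf hθ₀.le hθ₁ hρ₀ hρ₁ hC hA hB hAq hBq n
    t₁ t₂ ht₁ h12 ht₂ ((lt_div_iff₀ hgap).1 hn).le

end Iteration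

lemma exists_constants_mul_add_le {q C : ℝ} (hq : q < 1) (hC : 0 ≤ C) :
    ∃ A B : ℝ, 0 ≤ A ∧ A ≤ B ∧ 0 < B ∧ A * q + C ≤ A ∧ B * q + exp A * C ≤ B := by
  have h1q : 0 < 1 - q := sub_pos.2 hq
  set A := C / (1 - q) with hA
  refine ⟨A, (exp A * C + 1) / (1 - q), by positivity, ?_, by positivity, ?_, ?_⟩
  · have : C ≤ exp A * C + 1 := by nlinarith [one_le_exp (show 0 ≤ A by positivity)]
    exact div_le_div_of_nonneg_right this h1q.le
  · rw [hA]; field_simp; linarith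
  · field_simp; linarith

/-- For every `θ ∈ (0,1)` and `C₆ ≥ 0` there is `C₇ = C₇(θ, C₆) < ∞` such
that: if `ρ ∈ [0,1]` and `f : [0,1] → [0,∞)` is continuous and satisfies
`f(t₂) ≤ exp(C₆ ρ √(t₂−t₁)) f(t₁) + C₆ √(t₂−t₁)` for all `0 ≤ t₁ ≤ t₂ < 1` with
`t₂ − t₁ ≤ θ (1 − t₁)`, then `f(t₂) ≤ exp(C₇ ρ √(t₂−t₁)) f(t₁) + C₇ √(t₂−t₁)` for all
`0 ≤ t₁ ≤ t₂ ≤ 1`. -/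
theorem stmt_6 (θ : ℝ) (hθ₀ : 0 < θ) (hθ₁ : θ < 1) (C₆ : ℝ) (hC₆ : 0 ≤ C₆) :
    ∃ C₇ : ℝ, 0 < C₇ ∧
      ∀ (ρ : ℝ), 0 ≤ ρ → ρ ≤ 1 →
      ∀ f : ℝ → ℝ, ContinuousOn f (Set.Icc 0 1) →
        (∀ t ∈ Set.Icc (0:ℝ) 1, 0 ≤ f t) →
        (∀ t₁ t₂ : ℝ, 0 ≤ t₁ → t₁ ≤ t₂ → t₂ < 1 → t₂ - t₁ ≤ θ * (1 - t₁) →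
          f t₂ ≤ Real.exp (C₆ * ρ * Real.sqrt (t₂ - t₁)) * f t₁ +
            C₆ * Real.sqrt (t₂ - t₁)) →
        ∀ t₁ t₂ : ℝ, 0 ≤ t₁ → t₁ ≤ t₂ → t₂ ≤ 1 →
          f t₂ ≤ Real.exp (C₇ * ρ * Real.sqrt (t₂ - t₁)) * f t₁ +
            C₇ * Real.sqrt (t₂ - t₁) := by
  have hq : √(1 - θ) < 1 := (sqrt_lt' one_pos).2 (by nlinarith)
  obtain ⟨A, B, hA, hAB, hB, hAq, hBq⟩ := exists_constants_mul_add_le hq hC₆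
  refine ⟨B, hB, fun ρ hρ₀ hρ₁ f hf hf₀ hshort t₁ t₂ ht₁ h12 ht₂ => ?_⟩
  have hlt {t₁ t₂ : ℝ} (ht₁ : 0 ≤ t₁) (h12 : t₁ ≤ t₂) (ht₂ : t₂ < 1) :
      DistortionBound f ρ A B t₁ t₂ :=
    distortionBound_of_lt_one hshort hf₀ hθ₀ hθ₁.le hρ₀ hρ₁ hC₆ hA hB.le hAq hBq ht₁ h12 ht₂
  have hbound : DistortionBound f ρ A B t₁ t₂ := by
    rcases ht₂.lt_or_eq with ht₂ | rfl
    · exact hlt ht₁ h12 ht₂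
    rcases h12.lt_or_eq with h12 | rfl
    · have hf₁ : ContinuousWithinAt f (Set.Ico t₁ 1) 1 :=
        (hf 1 ⟨zero_le_one, le_rfl⟩).mono fun t ht => ⟨ht₁.trans ht.1, ht.2.le⟩
      exact .of_forall_lt h12 hf₁ fun t ht => hlt ht₁ ht.1 ht.2
    · exact .refl f ρ A B 1
  exact hbound.mono hρ₀ (hf₀ t₁ ⟨ht₁, h12.trans ht₂⟩) hAB le_rfl
end

section
/- For every λ ∈ (0, 1) and C ≥ 0 there exists a constant C' = C'(λ, C) < ∞ such that the following holds: let ρ ∈ [0, 1] and let f : (0, 1] → [0, ∞) satisfy f(t₂) ≤ exp(C·ρ·√(t₂ − t₁))·f(t₁) + C·√(t₂ − t₁) for all 0 < t₁ ≤ t₂ ≤ 1 with t₁ ≥ λ·t₂. Then f(t₂) ≤ exp(C'·ρ·√(t₂ − t₁))·f(t₁) + C'·√(t₂ − t₁) for all 0 < t₁ ≤ t₂ ≤ 1. -/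
/-!
Put `M = C / (1 - √λ)`, so that `C + M √λ = M`. Bounds of the shape
`f t₂ ≤ exp (M ρ √(t₂ - t₁)) (f t₁ + M √(t₂ - t₁))` compose along `t₁ ≤ s ≤ t₂` with the
exponents and additive constants adding up. Splitting `[t₁, t₂]` at `s = max (λ t₂) t₁` gives
one relative interval `[s, t₂]`, where the hypothesis applies with constant `C`, and a remainder
with `√(s - t₁) ≤ √λ √(t₂ - t₁)`, so the constant `M` reproduces itself: induction on `k` gives
the bound whenever `λ ^ k t₂ ≤ t₁`, hence for all `t₁ > 0`. Finally `ρ √(t₂ - t₁) ≤ 1` bounds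
the exponential factor in front of the additive term by `exp M`.
-/

open Real

section ExpAffineBound

variable {x y z α β γ δ : ℝ}

lemma le_exp_mul_of_le_exp_mul_add (h : x ≤ exp α * y + β) (hα : 0 ≤ α) (hβ : 0 ≤ β) :
    x ≤ exp α * (y + β) := by
  have : β ≤ exp α * β := le_mul_of_one_le_left hβ (one_le_exp hα)
  linarith

lemma le_exp_mul_add_trans (hxy : x ≤ exp α * (y + β)) (hyz : y ≤ exp γ * (z + δ))
    (hβ : 0 ≤ β) (hγ : 0 ≤ γ) : x ≤ exp (α + γ) * (z + (δ + β)) := by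
  have hβγ : β ≤ exp γ * β := le_mul_of_one_le_left hβ (one_le_exp hγ)
  calc x ≤ exp α * (exp γ * (z + δ) + exp γ * β) := hxy.trans (by gcongr)
    _ = exp (α + γ) * (z + (δ + β)) := by rw [exp_add]; ring

lemma le_exp_mul_add_mono (h : x ≤ exp α * (z + β)) (hα : α ≤ γ) (hβ : β ≤ δ)
    (hzβ : 0 ≤ z + β) : x ≤ exp γ * (z + δ) :=
  h.trans (mul_le_mul (exp_le_exp.2 hα) (by linarith) hzβ (exp_nonneg _))

end ExpAffineBound

lemma sqrt_sub_max_le {lam t₁ t₂ : ℝ} (hlam₀ : 0 ≤ lam) (hlam₁ : lam ≤ 1) (ht₁ : 0 ≤ t₁)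
    (ht : t₁ ≤ t₂) :
    √(max (lam * t₂) t₁ - t₁) ≤ √lam * √(t₂ - t₁) := by
  rw [← sqrt_mul hlam₀]
  refine sqrt_le_sqrt ?_
  rw [sub_le_iff_le_add]
  exact max_le (by nlinarith) (by nlinarith)

theorem le_exp_mul_add_of_pow_mul_le {lam C M ρ : ℝ} {f : ℝ → ℝ} (hlam₀ : 0 ≤ lam)
    (hlam₁ : lam ≤ 1) (hC : 0 ≤ C) (hM : 0 ≤ M) (hCM : C + M * √lam ≤ M) (hρ : 0 ≤ ρ)
    (hstep : ∀ t₁ t₂ : ℝ, 0 < t₁ → t₁ ≤ t₂ → t₂ ≤ 1 → lam * t₂ ≤ t₁ →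
      f t₂ ≤ exp (C * ρ * √(t₂ - t₁)) * f t₁ + C * √(t₂ - t₁))
    (k : ℕ) {t₁ t₂ : ℝ} (ht₁ : 0 < t₁) (ht : t₁ ≤ t₂) (ht₂ : t₂ ≤ 1) (hk : lam ^ k * t₂ ≤ t₁)
    (hf₁ : 0 ≤ f t₁) :
    f t₂ ≤ exp (M * ρ * √(t₂ - t₁)) * (f t₁ + M * √(t₂ - t₁)) := by
  induction k generalizing t₁ t₂ with
  | zero =>
    obtain rfl : t₁ = t₂ := le_antisymm ht (by simpa using hk)
    simp
  | succ k ih =>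
    set s := max (lam * t₂) t₁
    have hs₁ : t₁ ≤ s := le_max_right _ _
    have hs₂ : s ≤ t₂ := max_le (mul_le_of_le_one_left (by linarith) hlam₁) ht
    have hks : lam ^ k * s ≤ t₁ := by
      rw [mul_max_of_nonneg _ _ (pow_nonneg hlam₀ k)]
      refine max_le (by rw [← mul_assoc, ← pow_succ]; exact hk) ?_
      exact mul_le_of_le_one_left ht₁.le (pow_le_one₀ hlam₀ hlam₁)
    have hupper := le_exp_mul_of_le_exp_mul_add
      (hstep s t₂ (ht₁.trans_le hs₁) hs₂ ht₂ (le_max_left _ _)) (by positivity) (by positivity)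
    have hlower := ih ht₁ hs₁ (hs₂.trans ht₂) hks hf₁
    have hv : √(t₂ - s) ≤ √(t₂ - t₁) := sqrt_le_sqrt (by linarith)
    have hw := sqrt_sub_max_le hlam₀ hlam₁ ht₁.le ht
    have hsum : C * √(t₂ - s) + M * √(s - t₁) ≤ M * √(t₂ - t₁) :=
      calc C * √(t₂ - s) + M * √(s - t₁) ≤ C * √(t₂ - t₁) + M * (√lam * √(t₂ - t₁)) := by
            gcongr
        _ = (C + M * √lam) * √(t₂ - t₁) := by ring
        _ ≤ M * √(t₂ - t₁) := by gcongr
    refine le_exp_mul_add_mono (le_exp_mul_add_trans hupper hlower (by positivity) (by positivity))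
      ?_ (by linarith) (add_nonneg hf₁ (by positivity))
    linarith [mul_le_mul_of_nonneg_left hsum hρ]

lemma exp_mul_mul_add_le {M ρ u z : ℝ} (hM : 0 ≤ M) (hρ₀ : 0 ≤ ρ) (hρ₁ : ρ ≤ 1) (hu₀ : 0 ≤ u)
    (hu₁ : u ≤ 1) (hz : 0 ≤ z) :
    exp (M * ρ * u) * (z + M * u) ≤
      exp ((M * exp M + 1) * ρ * u) * z + (M * exp M + 1) * u := by
  have hMK : M ≤ M * exp M + 1 := by nlinarith [one_le_exp hM]
  have hρu : ρ * u ≤ 1 := mul_le_one₀ hρ₁ hu₀ hu₁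
  have hexp : exp (M * ρ * u) ≤ exp M :=
    exp_le_exp.2 (by rw [mul_assoc]; exact mul_le_of_le_one_right hM hρu)
  calc exp (M * ρ * u) * (z + M * u) = exp (M * ρ * u) * z + exp (M * ρ * u) * M * u := by ring
    _ ≤ exp ((M * exp M + 1) * ρ * u) * z + (M * exp M + 1) * u := by
      gcongr
      linarith [mul_le_mul_of_nonneg_right hexp hM]

/-- For every `λ ∈ (0,1)` and `C ≥ 0` there is `C' = C'(λ, C) < ∞` such that:
if `ρ ∈ [0,1]` and `f : (0,1] → [0,∞)` satisfies
`f(t₂) ≤ exp(C ρ √(t₂−t₁)) f(t₁) + C √(t₂−t₁)` for all `0 < t₁ ≤ t₂ ≤ 1` with `t₁ ≥ λ t₂`,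
then `f(t₂) ≤ exp(C' ρ √(t₂−t₁)) f(t₁) + C' √(t₂−t₁)` for all `0 < t₁ ≤ t₂ ≤ 1`. -/
theorem stmt_8 (lam : ℝ) (hlam₀ : 0 < lam) (hlam₁ : lam < 1) (C : ℝ) (hC : 0 ≤ C) :
    ∃ C' : ℝ, 0 < C' ∧
      ∀ (ρ : ℝ), 0 ≤ ρ → ρ ≤ 1 →
      ∀ f : ℝ → ℝ,
        (∀ t ∈ Set.Ioc (0:ℝ) 1, 0 ≤ f t) →
        (∀ t₁ t₂ : ℝ, 0 < t₁ → t₁ ≤ t₂ → t₂ ≤ 1 → lam * t₂ ≤ t₁ →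
          f t₂ ≤ Real.exp (C * ρ * Real.sqrt (t₂ - t₁)) * f t₁ +
            C * Real.sqrt (t₂ - t₁)) →
        ∀ t₁ t₂ : ℝ, 0 < t₁ → t₁ ≤ t₂ → t₂ ≤ 1 →
          f t₂ ≤ Real.exp (C' * ρ * Real.sqrt (t₂ - t₁)) * f t₁ +
            C' * Real.sqrt (t₂ - t₁) := by
  have hsqrt : √lam < 1 := (sqrt_lt' one_pos).2 (by rwa [one_pow])
  have hden : 0 < 1 - √lam := by linarith
  set M := C / (1 - √lam)
  have hM : 0 ≤ M := div_nonneg hC hden.le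
  have hCM : C + M * √lam = M := by simp only [M]; field_simp; ring
  refine ⟨M * exp M + 1, by positivity, fun ρ hρ₀ hρ₁ f hf hstep t₁ t₂ ht₁ ht ht₂ => ?_⟩
  obtain ⟨k, hk⟩ := exists_pow_lt_of_lt_one ht₁ hlam₁
  have hkt : lam ^ k * t₂ ≤ t₁ := (mul_le_of_le_one_right (by positivity) ht₂).trans hk.le
  have hf₁ : 0 ≤ f t₁ := hf t₁ ⟨ht₁, ht.trans ht₂⟩
  refine (le_exp_mul_add_of_pow_mul_le hlam₀.le hlam₁.le hC hM hCM.le hρ₀ hstep k ht₁ ht ht₂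
    hkt hf₁).trans (exp_mul_mul_add_le hM hρ₀ hρ₁ (sqrt_nonneg _) ?_ hf₁)
  exact sqrt_le_one.2 (by linarith)
end

section
/- Let C ≥ 1 and let f : [0, 1] → [0, ∞) be a measurable function such that for all t, t' ∈ [0, 1] one has |f(t) − f(t')| ≤ C·(1 + min{f(t), f(t')})·√|t − t'|. Then for every t₀ ∈ [0, 1] one has ∫₀¹ f(t) dt ≥ (1/(72 C²))·(min{f(t₀), 1})³. -/
open MeasureTheory

/-- Let `C ≥ 1` and `f : [0,1] → [0,∞)` be measurable with
`|f(t) − f(t')| ≤ C (1 + min{f(t), f(t')}) √|t − t'|` for all `t, t' ∈ [0,1]`. Then for every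
`t₀ ∈ [0,1]`, `∫₀¹ f ≥ (1/(72 C²)) (min{f(t₀), 1})³`. -/
theorem stmt_9 (C : ℝ) (hC : 1 ≤ C) (f : ℝ → ℝ) (hmeas : Measurable f)
    (hnonneg : ∀ t ∈ Set.Icc (0:ℝ) 1, 0 ≤ f t)
    (hHolder : ∀ t ∈ Set.Icc (0:ℝ) 1, ∀ t' ∈ Set.Icc (0:ℝ) 1,
      |f t - f t'| ≤ C * (1 + min (f t) (f t')) * Real.sqrt |t - t'|) :
    ∀ t₀ ∈ Set.Icc (0:ℝ) 1,
      1 / (72 * C ^ 2) * (min (f t₀) 1) ^ 3 ≤ ∫ t in (0:ℝ)..1, f t := by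
  intro t₀ ht₀
  have hC0 : (0:ℝ) < C := lt_of_lt_of_le one_pos hC
  set m := min (f t₀) 1 with hm
  have hm0 : 0 ≤ m := le_min (hnonneg t₀ ht₀) zero_le_one
  have hm1 : m ≤ 1 := min_le_right _ _
  have hmf : m ≤ f t₀ := min_le_left _ _
  -- boundedness of f on [0,1]
  have hB : ∀ t ∈ Set.Icc (0:ℝ) 1, |f t| ≤ f t₀ + C * (1 + f t₀) := by
    intro t ht
    rw [abs_of_nonneg (hnonneg t ht)]
    have h1 := hHolder t ht t₀ ht₀
    have hle : |f t - f t₀| ≤ C * (1 + f t₀) := by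
      have hmin : min (f t) (f t₀) ≤ f t₀ := min_le_right _ _
      have hs : Real.sqrt |t - t₀| ≤ 1 := by
        rw [show (1:ℝ) = Real.sqrt 1 by simp]
        apply Real.sqrt_le_sqrt
        rw [abs_le]
        constructor <;> [linarith [ht.1, ht.2, ht₀.1, ht₀.2]; linarith [ht.1, ht.2, ht₀.1, ht₀.2]]
      calc |f t - f t₀| ≤ C * (1 + min (f t) (f t₀)) * Real.sqrt |t - t₀| := h1
        _ ≤ C * (1 + f t₀) * 1 := by
            apply mul_le_mul
            · apply mul_le_mul_of_nonneg_left (by linarith) (le_of_lt hC0)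
            · exact hs
            · exact Real.sqrt_nonneg _
            · exact mul_nonneg hC0.le (by linarith [le_min (hnonneg t ht) (hnonneg t₀ ht₀)])
        _ = C * (1 + f t₀) := by ring
    have := abs_le.mp hle
    linarith [this.1, this.2]
  have hint : IntervalIntegrable f volume 0 1 := by
    rw [intervalIntegrable_iff_integrableOn_Icc_of_le zero_le_one]
    apply Measure.integrableOn_of_bounded (measure_Icc_lt_top.ne)
      hmeas.aestronglyMeasurable
    filter_upwards [ae_restrict_mem measurableSet_Icc] with t ht
    exact hB t ht
  set r := (m / (4 * C)) ^ 2 with hr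
  have hr0 : 0 ≤ r := sq_nonneg _
  have hsqrt : Real.sqrt r = m / (4 * C) := Real.sqrt_sq (by positivity)
  have hrhalf : r ≤ 1 / 2 := by
    have h1 : m / (4 * C) ≤ 1 / 4 := by
      rw [div_le_div_iff₀ (by positivity) (by norm_num)]
      nlinarith
    have h2 : (m / (4 * C)) ^ 2 ≤ (1/4) ^ 2 := by
      apply pow_le_pow_left₀ (by positivity) h1
    rw [hr]; nlinarith
  -- choose the subinterval
  obtain ⟨a, b, hba, hsub, hnear⟩ : ∃ a b : ℝ, b = a + r ∧ Set.Icc a b ⊆ Set.Icc 0 1 ∧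
      ∀ t ∈ Set.Icc a b, |t - t₀| ≤ r := by
    rcases le_or_gt t₀ (1/2) with h | h
    · refine ⟨t₀, t₀ + r, rfl, ?_, ?_⟩
      · intro t ht
        exact ⟨le_trans ht₀.1 ht.1, by linarith [ht.2]⟩
      · intro t ht
        rw [abs_le]; constructor <;> linarith [ht.1, ht.2]
    · refine ⟨t₀ - r, t₀, by ring, ?_, ?_⟩
      · intro t ht
        exact ⟨by linarith [ht.1], le_trans ht.2 ht₀.2⟩
      · intro t ht
        rw [abs_le]; constructor <;> linarith [ht.1, ht.2]
  have hab : a ≤ b := by rw [hba]; linarith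
  have ha0 : (0:ℝ) ≤ a := (hsub ⟨le_refl a, hab⟩).1
  have hb1 : b ≤ 1 := (hsub ⟨hab, le_refl b⟩).2
  -- the key lower bound on the subinterval
  have hkey : ∀ t ∈ Set.Icc a b, m / 2 ≤ f t := by
    intro t ht
    by_contra hcon
    push_neg at hcon
    have htI : t ∈ Set.Icc (0:ℝ) 1 := hsub ht
    have h1 := hHolder t₀ ht₀ t htI
    have hminle : min (f t₀) (f t) ≤ f t := min_le_right _ _
    have hs : Real.sqrt |t₀ - t| ≤ m / (4 * C) := by
      rw [← hsqrt]
      apply Real.sqrt_le_sqrt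
      rw [abs_sub_comm]
      exact hnear t ht
    have hft0 : 0 ≤ f t := hnonneg t htI
    have hlhs : m / 2 ≤ |f t₀ - f t| := by
      rw [abs_of_nonneg (by linarith)]
      linarith
    have hrhs : C * (1 + min (f t₀) (f t)) * Real.sqrt |t₀ - t| ≤ 3 * m / 8 := by
      have h2 : C * (1 + min (f t₀) (f t)) * Real.sqrt |t₀ - t| ≤
          C * (1 + m / 2) * (m / (4 * C)) := by
        apply mul_le_mul
        · apply mul_le_mul_of_nonneg_left (by linarith) (le_of_lt hC0)
        · exact hs
        · exact Real.sqrt_nonneg _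
        · positivity
      have h3 : C * (1 + m / 2) * (m / (4 * C)) = (1 + m / 2) * (m / 4) := by
        field_simp
      rw [h3] at h2
      nlinarith
    linarith
  -- assemble the integral bound
  have hint1 : IntervalIntegrable f volume 0 a := by
    apply hint.mono_set
    rw [Set.uIcc_of_le ha0, Set.uIcc_of_le zero_le_one]
    exact Set.Icc_subset_Icc le_rfl (le_trans hab hb1)
  have hint2 : IntervalIntegrable f volume a b := by
    apply hint.mono_set
    rw [Set.uIcc_of_le hab, Set.uIcc_of_le zero_le_one]
    exact Set.Icc_subset_Icc ha0 hb1
  have hint3 : IntervalIntegrable f volume b 1 := by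
    apply hint.mono_set
    rw [Set.uIcc_of_le hb1, Set.uIcc_of_le zero_le_one]
    exact Set.Icc_subset_Icc (le_trans ha0 hab) le_rfl
  have hsplit : (∫ t in (0:ℝ)..1, f t) =
      (∫ t in (0:ℝ)..a, f t) + (∫ t in a..b, f t) + (∫ t in b..1, f t) := by
    rw [intervalIntegral.integral_add_adjacent_intervals hint1 hint2,
      intervalIntegral.integral_add_adjacent_intervals (hint1.trans hint2) hint3]
  have hI1 : 0 ≤ ∫ t in (0:ℝ)..a, f t := by
    apply intervalIntegral.integral_nonneg ha0
    intro u hu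
    exact hnonneg u ⟨hu.1, le_trans hu.2 (le_trans hab hb1)⟩
  have hI3 : 0 ≤ ∫ t in b..1, f t := by
    apply intervalIntegral.integral_nonneg hb1
    intro u hu
    exact hnonneg u ⟨le_trans (le_trans ha0 hab) hu.1, hu.2⟩
  have hI2 : (b - a) * (m / 2) ≤ ∫ t in a..b, f t := by
    have := intervalIntegral.integral_mono_on hab
      (intervalIntegrable_const (c := m / 2)) hint2 hkey
    rwa [intervalIntegral.integral_const, smul_eq_mul] at this
  have hba' : b - a = r := by rw [hba]; ring
  have hcube : 1 / (72 * C ^ 2) * m ^ 3 ≤ r * (m / 2) := by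
    have h1 : r * (m / 2) = m ^ 3 / (32 * C ^ 2) := by
      rw [hr]; field_simp; ring
    have h2 : 1 / (72 * C ^ 2) * m ^ 3 = m ^ 3 / (72 * C ^ 2) := by ring
    rw [h1, h2]
    apply div_le_div_of_nonneg_left (by positivity) (by positivity)
    nlinarith
  calc 1 / (72 * C ^ 2) * m ^ 3 ≤ r * (m / 2) := hcube
    _ = (b - a) * (m / 2) := by rw [hba']
    _ ≤ ∫ t in a..b, f t := hI2
    _ ≤ (∫ t in (0:ℝ)..a, f t) + (∫ t in a..b, f t) + (∫ t in b..1, f t) := by linarith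
    _ = ∫ t in (0:ℝ)..1, f t := hsplit.symm
end

section
/- Let X be a set and for each t ∈ [0, 1] let d_t be a pseudometric on X such that for all x, y ∈ X the function t ↦ d_t(x, y) is measurable. Let C ≥ 1 and suppose that for all x, y ∈ X and t, t' ∈ [0, 1] one has |d_t(x, y) − d_{t'}(x, y)| ≤ C·(1 + min{d_t(x, y), d_{t'}(x, y)})·√|t − t'|. Define d̄(x, y) := ∫₀¹ d_t(x, y) dt. Then for every A < ∞ there exists C' = C'(C, A) < ∞ such that for all x, y, x', y' ∈ X and all t, t' ∈ [0, 1] with d̄(x, y) + d̄(x, x') + d̄(y, y') < A, one has |d_t(x, y) − d_{t'}(x', y')| ≤ C'·(d̄(x, x'))^{1/3} + C'·(d̄(y, y'))^{1/3} + C'·√|t − t'|. -/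
/-!
Integrating the Hölder bound over the second time shows `d_t ≤ (1 + C) d̄ + C`, which bounds
the factor in front of `√|t - t'|`. For the spatial terms, the first moment method on a window
of length `d̄^{2/3}` around `t'` yields a time `s` with `d_s ≤ d̄^{1/3}`, and the Hölder bound
carries this back to `t'` at a cost `2C d̄^{1/3}`; the case `d̄ = 0` follows by letting the
window shrink.
-/

open MeasureTheory Set Filter Topology

lemma abs_sub_le_add_of_triangle {X : Type*} {d : X → X → ℝ} (hsymm : ∀ x y, d x y = d y x)
    (htriangle : ∀ x y z, d x z ≤ d x y + d y z) (x y x' y' : X) :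
    |d x y - d x' y'| ≤ d x x' + d y y' := by
  rw [abs_sub_le_iff]
  constructor
  · linarith [htriangle x x' y, htriangle x' y' y, hsymm y' y]
  · linarith [htriangle x' x y', htriangle x y y', hsymm x' x]

lemma sqrt_abs_sub_le_one {t s : ℝ} (ht : t ∈ Icc (0:ℝ) 1) (hs : s ∈ Icc (0:ℝ) 1) :
    √|t - s| ≤ 1 :=
  Real.sqrt_le_one.mpr (abs_sub_le_iff.2 ⟨by linarith [ht.2, hs.1], by linarith [ht.1, hs.2]⟩)

lemma exists_mem_Icc_abs_sub_le_mul_le_integral {g : ℝ → ℝ}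
    (hg : IntervalIntegrable g volume 0 1) (hg0 : ∀ s ∈ Icc (0:ℝ) 1, 0 ≤ g s)
    {t δ : ℝ} (ht : t ∈ Icc (0:ℝ) 1) (hδ : δ ∈ Ioc (0:ℝ) 1) :
    ∃ s ∈ Icc (0:ℝ) 1, |s - t| ≤ δ ∧ δ * g s ≤ ∫ u in (0:ℝ)..1, g u := by
  set a := min t (1 - δ)
  have ha : t - δ ≤ a := le_min (by linarith [hδ.1]) (by linarith [ht.2])
  have hJ : Icc a (a + δ) ⊆ Icc 0 1 :=
    Icc_subset_Icc (le_min ht.1 (by linarith [hδ.2])) (by linarith [min_le_right t (1 - δ)])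
  have hvol : volume.real (Icc a (a + δ)) = δ := by
    simp [Real.volume_real_Icc, hδ.1.le]
  rw [intervalIntegrable_iff_integrableOn_Icc_of_le zero_le_one] at hg
  obtain ⟨s, hs, hgs⟩ := exists_le_setAverage (by simp [hδ.1]) (by simp) (hg.mono_set hJ)
  refine ⟨s, hJ hs, abs_sub_le_iff.2 ⟨?_, ?_⟩, ?_⟩
  · linarith [hs.2, min_le_left t (1 - δ)]
  · linarith [hs.1]
  rw [setAverage_eq, hvol, smul_eq_mul, ← div_eq_inv_mul, le_div_iff₀' hδ.1] at hgs
  calc δ * g s ≤ ∫ u in Icc a (a + δ), g u := hgs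
    _ ≤ ∫ u in Icc 0 1, g u :=
      setIntegral_mono_set hg ((ae_restrict_mem measurableSet_Icc).mono hg0)
        (Eventually.of_forall hJ)
    _ = ∫ u in (0:ℝ)..1, g u := by
      rw [intervalIntegral.integral_of_le zero_le_one, integral_Icc_eq_integral_Ioc]

def SqrtHolderOn (C : ℝ) (f : ℝ → ℝ) : Prop :=
  ∀ t ∈ Icc (0:ℝ) 1, ∀ s ∈ Icc (0:ℝ) 1, |f t - f s| ≤ C * (1 + min (f t) (f s)) * √|t - s|

namespace SqrtHolderOn

variable {C : ℝ} {f : ℝ → ℝ} {t s : ℝ}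

lemma sub_le (hf : SqrtHolderOn C f) (hC : 0 ≤ C) (ht : t ∈ Icc (0:ℝ) 1)
    (hs : s ∈ Icc (0:ℝ) 1) : f t - f s ≤ C * (1 + f s) * √|t - s| :=
  calc f t - f s ≤ |f t - f s| := le_abs_self _
    _ ≤ C * (1 + min (f t) (f s)) * √|t - s| := hf t ht s hs
    _ ≤ C * (1 + f s) * √|t - s| := by gcongr; exact min_le_right _ _

lemma le_mul_add (hf : SqrtHolderOn C f) (hC : 0 ≤ C) (hf0 : ∀ u ∈ Icc (0:ℝ) 1, 0 ≤ f u)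
    (ht : t ∈ Icc (0:ℝ) 1) (hs : s ∈ Icc (0:ℝ) 1) : f t ≤ (1 + C) * f s + C := by
  have hfs := hf0 s hs
  have := mul_le_of_le_one_right (a := C * (1 + f s)) (by positivity) (sqrt_abs_sub_le_one ht hs)
  linarith [hf.sub_le hC ht hs]

lemma intervalIntegrable (hf : SqrtHolderOn C f) (hC : 0 ≤ C)
    (hf0 : ∀ u ∈ Icc (0:ℝ) 1, 0 ≤ f u) (hmeas : Measurable f) :
    IntervalIntegrable f volume 0 1 := by
  rw [intervalIntegrable_iff_integrableOn_Icc_of_le zero_le_one]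
  refine IntegrableOn.of_bound measure_Icc_lt_top hmeas.aestronglyMeasurable
    ((1 + C) * f 0 + C) ?_
  filter_upwards [ae_restrict_mem measurableSet_Icc] with u hu
  rw [Real.norm_of_nonneg (hf0 u hu)]
  exact hf.le_mul_add hC hf0 hu (left_mem_Icc.2 zero_le_one)

lemma le_mul_integral_add (hf : SqrtHolderOn C f) (hC : 0 ≤ C)
    (hf0 : ∀ u ∈ Icc (0:ℝ) 1, 0 ≤ f u) (hmeas : Measurable f) (ht : t ∈ Icc (0:ℝ) 1) :
    f t ≤ (1 + C) * (∫ u in (0:ℝ)..1, f u) + C := by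
  have hint := (hf.intervalIntegrable hC hf0 hmeas).const_mul (1 + C)
  calc f t = ∫ _ in (0:ℝ)..1, f t := by simp
    _ ≤ ∫ u in (0:ℝ)..1, ((1 + C) * f u + C) :=
      intervalIntegral.integral_mono_on zero_le_one intervalIntegrable_const
        (hint.add intervalIntegrable_const) fun u hu => hf.le_mul_add hC hf0 ht hu
    _ = (1 + C) * (∫ u in (0:ℝ)..1, f u) + C := by
      simp [intervalIntegral.integral_add hint intervalIntegrable_const]

lemma le_mul_rpow_of_integral_le (hf : SqrtHolderOn C f) (hC : 0 ≤ C)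
    (hf0 : ∀ u ∈ Icc (0:ℝ) 1, 0 ≤ f u) (hmeas : Measurable f) (ht : t ∈ Icc (0:ℝ) 1)
    {η : ℝ} (hη : η ∈ Ioc (0:ℝ) 1) (hfη : ∫ u in (0:ℝ)..1, f u ≤ η) :
    f t ≤ (1 + 2 * C) * η ^ ((1:ℝ) / 3) := by
  set r := η ^ ((1:ℝ) / 3)
  have hr0 : 0 < r := Real.rpow_pos_of_pos hη.1 _
  have hr1 : r ≤ 1 := Real.rpow_le_one hη.1.le hη.2 (by norm_num)
  have hr3 : r ^ 3 = η := by
    simp only [r, one_div]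
    exact Real.rpow_inv_natCast_pow hη.1.le three_ne_zero
  -- the window length `r ^ 2` balances `f s ≤ η / r ^ 2 = r` against `√|t - s| ≤ r`
  obtain ⟨s, hs, hts, hfs⟩ := exists_mem_Icc_abs_sub_le_mul_le_integral
    (hf.intervalIntegrable hC hf0 hmeas) hf0 ht ⟨by positivity, pow_le_one₀ hr0.le hr1⟩
  have hfs : f s ≤ r := le_of_mul_le_mul_left (by nlinarith) (pow_pos hr0 2)
  have hsqrt : √|t - s| ≤ r := by
    rw [abs_sub_comm, ← Real.sqrt_sq hr0.le]
    exact Real.sqrt_le_sqrt hts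
  calc f t ≤ f s + C * (1 + f s) * √|t - s| := by linarith [hf.sub_le hC ht hs]
    _ ≤ r + C * (1 + 1) * r := by have := hf0 s hs; gcongr; linarith
    _ = (1 + 2 * C) * r := by ring

lemma le_mul_rpow_integral (hf : SqrtHolderOn C f) (hC : 0 ≤ C)
    (hf0 : ∀ u ∈ Icc (0:ℝ) 1, 0 ≤ f u) (hmeas : Measurable f) (ht : t ∈ Icc (0:ℝ) 1)
    (hf1 : ∫ u in (0:ℝ)..1, f u < 1) :
    f t ≤ (1 + 2 * C) * (∫ u in (0:ℝ)..1, f u) ^ ((1:ℝ) / 3) := by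
  set b := ∫ u in (0:ℝ)..1, f u
  have hb0 : 0 ≤ b := intervalIntegral.integral_nonneg zero_le_one hf0
  have hlim : Tendsto (fun η : ℝ => (1 + 2 * C) * η ^ ((1:ℝ) / 3)) (𝓝[>] b)
      (𝓝 ((1 + 2 * C) * b ^ ((1:ℝ) / 3))) :=
    ((continuous_const.mul (Real.continuous_rpow_const (by norm_num))).tendsto b).mono_left
      nhdsWithin_le_nhds
  refine ge_of_tendsto hlim ?_
  filter_upwards [Ioo_mem_nhdsGT hf1] with η hη
  exact hf.le_mul_rpow_of_integral_le hC hf0 hmeas ht ⟨hb0.trans_lt hη.1, hη.2.le⟩ hη.1.le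

lemma le_mul_rpow_integral_of_integral_le (hf : SqrtHolderOn C f) (hC : 0 ≤ C)
    (hf0 : ∀ u ∈ Icc (0:ℝ) 1, 0 ≤ f u) (hmeas : Measurable f) (ht : t ∈ Icc (0:ℝ) 1)
    {A : ℝ} (hA : ∫ u in (0:ℝ)..1, f u ≤ A) :
    f t ≤ ((1 + C) * max A 1 + C) * (∫ u in (0:ℝ)..1, f u) ^ ((1:ℝ) / 3) := by
  set b := ∫ u in (0:ℝ)..1, f u
  rcases lt_or_ge b 1 with hb1 | hb1
  · have hb0 : 0 ≤ b := intervalIntegral.integral_nonneg zero_le_one hf0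
    calc f t ≤ (1 + 2 * C) * b ^ ((1:ℝ) / 3) := hf.le_mul_rpow_integral hC hf0 hmeas ht hb1
      _ ≤ ((1 + C) * max A 1 + C) * b ^ ((1:ℝ) / 3) := by
        have := le_max_right A 1
        exact mul_le_mul_of_nonneg_right (by nlinarith) (Real.rpow_nonneg hb0 _)
  · calc f t ≤ (1 + C) * b + C := hf.le_mul_integral_add hC hf0 hmeas ht
      _ ≤ (1 + C) * max A 1 + C := by gcongr; exact le_max_of_le_left hA
      _ ≤ ((1 + C) * max A 1 + C) * b ^ ((1:ℝ) / 3) :=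
        le_mul_of_one_le_right (by positivity) (Real.one_le_rpow hb1 (by norm_num))

lemma abs_sub_le_mul_sqrt (hf : SqrtHolderOn C f) (hC : 0 ≤ C)
    (hf0 : ∀ u ∈ Icc (0:ℝ) 1, 0 ≤ f u) (hmeas : Measurable f) (ht : t ∈ Icc (0:ℝ) 1)
    (hs : s ∈ Icc (0:ℝ) 1) {A : ℝ} (hA : ∫ u in (0:ℝ)..1, f u ≤ A) :
    |f t - f s| ≤ C * (1 + ((1 + C) * max A 1 + C)) * √|t - s| :=
  calc |f t - f s| ≤ C * (1 + min (f t) (f s)) * √|t - s| := hf t ht s hs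
    _ ≤ C * (1 + ((1 + C) * max A 1 + C)) * √|t - s| := by
      gcongr
      calc min (f t) (f s) ≤ f t := min_le_left _ _
        _ ≤ (1 + C) * (∫ u in (0:ℝ)..1, f u) + C := hf.le_mul_integral_add hC hf0 hmeas ht
        _ ≤ (1 + C) * max A 1 + C := by gcongr; exact le_max_of_le_left hA

end SqrtHolderOn

theorem stmt_10_general (X : Type) (d : ℝ → X → X → ℝ)
    (hnonneg : ∀ t ∈ Set.Icc (0:ℝ) 1, ∀ x y : X, 0 ≤ d t x y)
    (hsymm : ∀ t ∈ Set.Icc (0:ℝ) 1, ∀ x y : X, d t x y = d t y x)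
    (htriangle : ∀ t ∈ Set.Icc (0:ℝ) 1, ∀ x y z : X, d t x z ≤ d t x y + d t y z)
    (hmeas : ∀ x y : X, Measurable (fun t => d t x y))
    (C : ℝ) (hC : 1 ≤ C)
    (hHolder : ∀ (x y : X), ∀ t ∈ Set.Icc (0:ℝ) 1, ∀ t' ∈ Set.Icc (0:ℝ) 1,
      |d t x y - d t' x y| ≤
        C * (1 + min (d t x y) (d t' x y)) * Real.sqrt |t - t'|)
    (dbar : X → X → ℝ) (hdbar : ∀ x y : X, dbar x y = ∫ t in (0:ℝ)..1, d t x y) :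
    ∀ A : ℝ, ∃ C' : ℝ, 0 < C' ∧
      ∀ (x y x' y' : X), ∀ t ∈ Set.Icc (0:ℝ) 1, ∀ t' ∈ Set.Icc (0:ℝ) 1,
        dbar x y + dbar x x' + dbar y y' < A →
        |d t x y - d t' x' y'| ≤
          C' * (dbar x x') ^ ((1:ℝ)/3) + C' * (dbar y y') ^ ((1:ℝ)/3) +
            C' * Real.sqrt |t - t'| := by
  intro A
  have hC0 : 0 ≤ C := zero_le_one.trans hC
  have hpair : ∀ x y, SqrtHolderOn C (fun t => d t x y) := hHolder
  have hdbar0 : ∀ x y, 0 ≤ dbar x y := fun x y =>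
    (hdbar x y).symm ▸ intervalIntegral.integral_nonneg zero_le_one fun t ht => hnonneg t ht x y
  set K := (1 + C) * max A 1 + C
  have hK0 : 0 ≤ K := by positivity
  have hK : K ≤ C * (1 + K) := by nlinarith
  refine ⟨C * (1 + K), by positivity, ?_⟩
  intro x y x' y' t ht t' ht' hA
  have hspace : ∀ u v, dbar u v ≤ A → d t' u v ≤ C * (1 + K) * dbar u v ^ ((1:ℝ) / 3) := by
    intro u v huv
    have := (hpair u v).le_mul_rpow_integral_of_integral_le hC0 (fun s hs => hnonneg s hs u v)
      (hmeas u v) ht' (hdbar u v ▸ huv)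
    rw [← hdbar] at this
    exact this.trans (by have := Real.rpow_nonneg (hdbar0 u v) ((1:ℝ) / 3); gcongr)
  have htime : |d t x y - d t' x y| ≤ C * (1 + K) * √|t - t'| :=
    (hpair x y).abs_sub_le_mul_sqrt hC0 (fun s hs => hnonneg s hs x y) (hmeas x y) ht ht'
      (hdbar x y ▸ by linarith [hdbar0 x x', hdbar0 y y'])
  calc |d t x y - d t' x' y'| ≤ |d t x y - d t' x y| + |d t' x y - d t' x' y'| :=
        abs_sub_le _ _ _
    _ ≤ C * (1 + K) * √|t - t'| + (d t' x x' + d t' y y') :=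
        add_le_add htime (abs_sub_le_add_of_triangle (hsymm t' ht') (htriangle t' ht') x y x' y')
    _ ≤ _ := by
      linarith [hspace x x' (by linarith [hdbar0 x y, hdbar0 y y']),
        hspace y y' (by linarith [hdbar0 x y, hdbar0 x x'])]

/-- Let `X` be a set, `(d_t)_{t ∈ [0,1]}` a measurable-in-time family of
pseudometrics on `X`, `C ≥ 1`, with `|d_t(x,y) − d_{t'}(x,y)| ≤
C (1 + min{d_t(x,y), d_{t'}(x,y)}) √|t−t'|` for all `x, y` and `t, t' ∈ [0,1]`. With
`d̄(x,y) := ∫₀¹ d_t(x,y) dt`, for every `A < ∞` there is `C' = C'(C, A) < ∞` such that for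
all `x, y, x', y'` and `t, t' ∈ [0,1]` with `d̄(x,y) + d̄(x,x') + d̄(y,y') < A` one has
`|d_t(x,y) − d_{t'}(x',y')| ≤ C' d̄(x,x')^{1/3} + C' d̄(y,y')^{1/3} + C' √|t−t'|`. -/
theorem stmt_10 (X : Type) (d : ℝ → X → X → ℝ)
    (hnonneg : ∀ t ∈ Set.Icc (0:ℝ) 1, ∀ x y : X, 0 ≤ d t x y)
    (hself : ∀ t ∈ Set.Icc (0:ℝ) 1, ∀ x : X, d t x x = 0)
    (hsymm : ∀ t ∈ Set.Icc (0:ℝ) 1, ∀ x y : X, d t x y = d t y x)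
    (htriangle : ∀ t ∈ Set.Icc (0:ℝ) 1, ∀ x y z : X, d t x z ≤ d t x y + d t y z)
    (hmeas : ∀ x y : X, Measurable (fun t => d t x y))
    (C : ℝ) (hC : 1 ≤ C)
    (hHolder : ∀ (x y : X), ∀ t ∈ Set.Icc (0:ℝ) 1, ∀ t' ∈ Set.Icc (0:ℝ) 1,
      |d t x y - d t' x y| ≤
        C * (1 + min (d t x y) (d t' x y)) * Real.sqrt |t - t'|)
    (dbar : X → X → ℝ) (hdbar : ∀ x y : X, dbar x y = ∫ t in (0:ℝ)..1, d t x y) :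
    ∀ A : ℝ, ∃ C' : ℝ, 0 < C' ∧
      ∀ (x y x' y' : X), ∀ t ∈ Set.Icc (0:ℝ) 1, ∀ t' ∈ Set.Icc (0:ℝ) 1,
        dbar x y + dbar x x' + dbar y y' < A →
        |d t x y - d t' x' y'| ≤
          C' * (dbar x x') ^ ((1:ℝ)/3) + C' * (dbar y y') ^ ((1:ℝ)/3) +
            C' * Real.sqrt |t - t'| :=
  stmt_10_general X d hnonneg hsymm htriangle hmeas C hC hHolder dbar hdbar
end

section
/- Let X be a set, T > 0 and C ≥ 1, and for each t ∈ [0, T) let d_t be a pseudometric on X such that for all x, y ∈ X and all s, t ∈ [0, T) one has |d_s(x, y) − d_t(x, y)| ≤ C·(1 + min{d_s(x, y), d_t(x, y)})·√|t − s|. Then for all x, y ∈ X the limit d_T(x, y) := lim_{t → T⁻} d_t(x, y) exists, d_T is a pseudometric on X, and for all x, y ∈ X the function t ↦ d_t(x, y) is continuous on the closed interval [0, T]. -/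
open Filter Topology

/-- Let `X` be a set, `T > 0`, `C ≥ 1`, and for each `t ∈ [0, T)` let `d_t`
be a pseudometric on `X` such that
`|d_s(x,y) − d_t(x,y)| ≤ C (1 + min{d_s(x,y), d_t(x,y)}) √|t−s|` for all `x, y` and
`s, t ∈ [0, T)`. Then the limit `d_T(x,y) := lim_{t → T⁻} d_t(x,y)` exists, `d_T` is a
pseudometric on `X`, and for all `x, y` the function `t ↦ d_t(x,y)` (extended by `d_T` at
`t = T`) is continuous on `[0, T]`. -/
theorem stmt_14 (X : Type) (T : ℝ) (hT : 0 < T) (C : ℝ) (hC : 1 ≤ C)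
    (d : ℝ → X → X → ℝ)
    (hnonneg : ∀ t ∈ Set.Ico (0:ℝ) T, ∀ x y : X, 0 ≤ d t x y)
    (hself : ∀ t ∈ Set.Ico (0:ℝ) T, ∀ x : X, d t x x = 0)
    (hsymm : ∀ t ∈ Set.Ico (0:ℝ) T, ∀ x y : X, d t x y = d t y x)
    (htriangle : ∀ t ∈ Set.Ico (0:ℝ) T, ∀ x y z : X, d t x z ≤ d t x y + d t y z)
    (hHolder : ∀ (x y : X), ∀ s ∈ Set.Ico (0:ℝ) T, ∀ t ∈ Set.Ico (0:ℝ) T,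
      |d s x y - d t x y| ≤
        C * (1 + min (d s x y) (d t x y)) * Real.sqrt |t - s|) :
    ∃ dT : X → X → ℝ,
      (∀ x y : X, Tendsto (fun t => d t x y) (𝓝[<] T) (𝓝 (dT x y))) ∧
      (∀ x y : X, 0 ≤ dT x y) ∧
      (∀ x : X, dT x x = 0) ∧
      (∀ x y : X, dT x y = dT y x) ∧
      (∀ x y z : X, dT x z ≤ dT x y + dT y z) ∧
      (∀ x y : X, ContinuousOn (fun t => if t < T then d t x y else dT x y)
        (Set.Icc 0 T)) := by
  have hC0 : (0:ℝ) < C := lt_of_lt_of_le one_pos hC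
  have h0T : (0:ℝ) ∈ Set.Ico (0:ℝ) T := ⟨le_refl _, hT⟩
  have hsqT : (0:ℝ) ≤ Real.sqrt T := Real.sqrt_nonneg T
  set K : X → X → ℝ := fun x y =>
    C * (1 + ((1 + C * Real.sqrt T) * d 0 x y + C * Real.sqrt T)) with hKdef
  have hK1 : ∀ x y : X, 1 ≤ K x y := by
    intro x y
    have h1 : 0 ≤ d 0 x y := hnonneg 0 h0T x y
    have h2 : 0 ≤ C * Real.sqrt T := by positivity
    have h3 : 0 ≤ (1 + C * Real.sqrt T) * d 0 x y + C * Real.sqrt T :=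
      add_nonneg (mul_nonneg (by nlinarith) h1) h2
    simp only [hKdef]
    nlinarith [mul_nonneg (le_of_lt hC0) h3]
  have hM : ∀ x y : X, ∀ t ∈ Set.Ico (0:ℝ) T,
      d t x y ≤ (1 + C * Real.sqrt T) * d 0 x y + C * Real.sqrt T := by
    intro x y t ht
    have hab := hHolder x y 0 h0T t ht
    have hmin : min (d 0 x y) (d t x y) ≤ d 0 x y := min_le_left _ _
    have h1 : 0 ≤ d 0 x y := hnonneg 0 h0T x y
    have hsq : Real.sqrt |t - 0| ≤ Real.sqrt T := by
      apply Real.sqrt_le_sqrt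
      rw [sub_zero, abs_of_nonneg ht.1]
      exact le_of_lt ht.2
    have hle : d t x y - d 0 x y ≤ |d 0 x y - d t x y| := by
      rw [abs_sub_comm]; exact le_abs_self _
    have hsqnn : 0 ≤ Real.sqrt |t - 0| := Real.sqrt_nonneg _
    have step1 : C * (1 + min (d 0 x y) (d t x y)) * Real.sqrt |t - 0| ≤
        C * (1 + d 0 x y) * Real.sqrt T := by
      apply mul_le_mul ?_ hsq hsqnn (by nlinarith)
      nlinarith [mul_nonneg (le_of_lt hC0) (sub_nonneg.2 hmin)]
    nlinarith [step1]
  have hH2 : ∀ x y : X, ∀ s ∈ Set.Ico (0:ℝ) T, ∀ t ∈ Set.Ico (0:ℝ) T,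
      |d s x y - d t x y| ≤ K x y * Real.sqrt |t - s| := by
    intro x y s hs t ht
    have hab := hHolder x y s hs t ht
    have hmin : min (d s x y) (d t x y) ≤ (1 + C * Real.sqrt T) * d 0 x y + C * Real.sqrt T :=
      le_trans (min_le_left _ _) (hM x y s hs)
    have hsqnn : 0 ≤ Real.sqrt |t - s| := Real.sqrt_nonneg _
    simp only [hKdef]
    nlinarith [mul_nonneg (mul_nonneg (le_of_lt hC0) hsqnn)
      (sub_nonneg.2 hmin)]
  -- existence of limits
  have key : ∀ x y : X, ∃ L : ℝ, Tendsto (fun t => d t x y) (𝓝[<] T) (𝓝 L) := by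
    intro x y
    have hK0 : 0 < K x y := lt_of_lt_of_le one_pos (hK1 x y)
    have hc : Cauchy (Filter.map (fun t => d t x y) (𝓝[<] T)) := by
      rw [Metric.cauchy_iff]
      constructor
      · exact Filter.map_neBot
      · intro ε hε
        set δ : ℝ := (ε / (2 * K x y)) ^ 2 with hδdef
        have hδ0 : 0 < δ := by positivity
        have hsqδ : Real.sqrt δ = ε / (2 * K x y) := Real.sqrt_sq (by positivity)
        set s : Set ℝ := Set.Ioo (max 0 (T - δ)) T with hsdef
        have hsmem : s ∈ 𝓝[<] T := by
          apply Ioo_mem_nhdsLT_of_mem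
          constructor
          · exact max_lt hT (by linarith)
          · exact le_refl _
        refine ⟨(fun t => d t x y) '' s, Filter.image_mem_map hsmem, ?_⟩
        rintro _ ⟨a, ha, rfl⟩ _ ⟨b, hb, rfl⟩
        have haI : a ∈ Set.Ico (0:ℝ) T := ⟨le_of_lt (lt_of_le_of_lt (le_max_left _ _) ha.1), ha.2⟩
        have hbI : b ∈ Set.Ico (0:ℝ) T := ⟨le_of_lt (lt_of_le_of_lt (le_max_left _ _) hb.1), hb.2⟩
        have hdist : |b - a| ≤ δ := by
          have h1 : T - δ < a := lt_of_le_of_lt (le_max_right _ _) ha.1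
          have h2 : T - δ < b := lt_of_le_of_lt (le_max_right _ _) hb.1
          rw [abs_le]; constructor <;> nlinarith [ha.2, hb.2]
        have := hH2 x y a haI b hbI
        have hsq : Real.sqrt |b - a| ≤ Real.sqrt δ := Real.sqrt_le_sqrt hdist
        rw [Real.dist_eq]
        calc |d a x y - d b x y| ≤ K x y * Real.sqrt |b - a| := this
          _ ≤ K x y * Real.sqrt δ := by nlinarith
          _ = ε / 2 := by rw [hsqδ]; field_simp
          _ < ε := by linarith
    obtain ⟨L, hL⟩ := CompleteSpace.complete hc
    exact ⟨L, hL⟩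
  choose dT hdT using key
  have hIcoMem : Set.Ico (0:ℝ) T ∈ 𝓝[<] T := by
    apply Filter.mem_of_superset (Ioo_mem_nhdsLT_of_mem (⟨hT, le_refl T⟩ : T ∈ Set.Ioc 0 T))
    exact Set.Ioo_subset_Ico_self
  refine ⟨dT, hdT, ?_, ?_, ?_, ?_, ?_⟩
  · -- nonneg
    intro x y
    refine ge_of_tendsto (hdT x y) ?_
    filter_upwards [hIcoMem] with t ht using hnonneg t ht x y
  · -- self
    intro x
    refine tendsto_nhds_unique (hdT x x) ?_
    refine Tendsto.congr' ?_ tendsto_const_nhds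
    filter_upwards [hIcoMem] with t ht using (hself t ht x).symm
  · -- symm
    intro x y
    refine tendsto_nhds_unique (hdT x y) ?_
    refine Tendsto.congr' ?_ (hdT y x)
    filter_upwards [hIcoMem] with t ht using (hsymm t ht y x)
  · -- triangle
    intro x y z
    refine le_of_tendsto_of_tendsto (hdT x z) ((hdT x y).add (hdT y z)) ?_
    filter_upwards [hIcoMem] with t ht using htriangle t ht x y z
  · -- continuity
    intro x y
    set g : ℝ → ℝ := fun t => if t < T then d t x y else dT x y with hgdef
    have hK0 : 0 < K x y := lt_of_lt_of_le one_pos (hK1 x y)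
    -- bound |d s - dT| ≤ K √(T - s)
    have hlim : ∀ s ∈ Set.Ico (0:ℝ) T, |d s x y - dT x y| ≤ K x y * Real.sqrt (T - s) := by
      intro s hs
      have htends : Tendsto (fun u => |d s x y - d u x y|) (𝓝[<] T)
          (𝓝 |d s x y - dT x y|) := (tendsto_const_nhds.sub (hdT x y)).abs
      refine le_of_tendsto htends ?_
      have hIoo : Set.Ioo s T ∈ 𝓝[<] T := Ioo_mem_nhdsLT_of_mem ⟨hs.2, le_refl _⟩
      filter_upwards [hIoo] with u hu
      have huI : u ∈ Set.Ico (0:ℝ) T := ⟨le_of_lt (lt_of_le_of_lt hs.1 hu.1), hu.2⟩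
      have h1 := hH2 x y s hs u huI
      have hsq : Real.sqrt |u - s| ≤ Real.sqrt (T - s) := by
        apply Real.sqrt_le_sqrt
        rw [abs_of_nonneg (by linarith [hu.1] : (0:ℝ) ≤ u - s)]
        linarith [hu.2]
      nlinarith [Real.sqrt_nonneg |u - s|]
    have hG : ∀ s ∈ Set.Icc (0:ℝ) T, ∀ t ∈ Set.Icc (0:ℝ) T,
        |g s - g t| ≤ K x y * Real.sqrt |t - s| := by
      intro s hs t ht
      simp only [hgdef]
      by_cases hsT : s < T <;> by_cases htT : t < T
      · simp only [if_pos hsT, if_pos htT]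
        exact hH2 x y s ⟨hs.1, hsT⟩ t ⟨ht.1, htT⟩
      · have htT' : t = T := le_antisymm ht.2 (not_lt.1 htT)
        simp only [if_pos hsT, if_neg htT, htT']
        rw [if_neg (lt_irrefl T), abs_of_nonneg (show (0:ℝ) ≤ T - s by linarith)]
        exact hlim s ⟨hs.1, hsT⟩
      · have hsT' : s = T := le_antisymm hs.2 (not_lt.1 hsT)
        simp only [if_neg hsT, if_pos htT, hsT']
        rw [if_neg (lt_irrefl T), abs_sub_comm, abs_sub_comm t T, abs_of_nonneg (show (0:ℝ) ≤ T - t by linarith)]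
        exact hlim t ⟨ht.1, htT⟩
      · simp only [if_neg hsT, if_neg htT, sub_self, abs_zero]
        positivity
    intro a ha
    rw [Metric.continuousWithinAt_iff]
    intro ε hε
    refine ⟨(ε / (2 * K x y)) ^ 2, by positivity, ?_⟩
    intro t ht hdist
    have hsqδ : Real.sqrt ((ε / (2 * K x y)) ^ 2) = ε / (2 * K x y) :=
      Real.sqrt_sq (by positivity)
    rw [Real.dist_eq] at hdist ⊢
    have h1 := hG t ht a ha
    have hsq : Real.sqrt |a - t| ≤ Real.sqrt ((ε / (2 * K x y)) ^ 2) := by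
      apply Real.sqrt_le_sqrt
      rw [abs_sub_comm]
      exact le_of_lt hdist
    calc |g t - g a| ≤ K x y * Real.sqrt |a - t| := h1
      _ ≤ K x y * (ε / (2 * K x y)) := by rw [← hsqδ]; nlinarith
      _ = ε / 2 := by field_simp
      _ < ε := by linarith
end
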